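/- Let ((E_n)_{n∈ℕ}, (p_{m,n})_{m≥n}) be an inverse system of vector lattices indexed by the natural numbers, with all connecting maps p_{m,n} : E_m → E_n surjective interval preserving lattice homomorphisms, and let (E, (p_n)) be its inverse limit. Then each canonical projection p_n : E → E_n is surjective and interval preserving. -/

import Mathlib

/-!
Surjectivity and interval preservation are one statement: for a family of sets `S n ⊆ E n`
with `p_{nm}(S m) = S n` for all `n ≤ m` (take `S n = E n`, resp. `S n = [0, u n]` for a
positive thread `u`), every `x ∈ S n` lies on a thread running through the `S k`. Such a
thread is built by lifting `x` one step at a time along `E n ← E (n+1) ← ⋯` (dependent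
choice) and pushing the lifts down to the levels below `n`.
-/

open Set

def threads {E : ℕ → Type*}
    [∀ n, AddCommGroup (E n)] [∀ n, Module ℝ (E n)]
    (p : ∀ {n m : ℕ}, n ≤ m → (E m →ₗ[ℝ] E n)) : Set (∀ n, E n) :=
  {u | ∀ (n m : ℕ) (h : n ≤ m), p h (u m) = u n}

theorem exists_seq_of_surjOn_succ {E : ℕ → Type*} {g : ∀ k, E (k + 1) → E k}
    {S : ∀ k, Set (E k)} (hg : ∀ k, SurjOn (g k) (S (k + 1)) (S k)) {x : E 0} (hx : x ∈ S 0) :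
    ∃ v : ∀ k, E k, v 0 = x ∧ ∀ k, v k ∈ S k ∧ g k (v (k + 1)) = v k := by
  choose lift hliftS hlift using hg
  let w : ∀ k, S k := fun k =>
    Nat.rec (motive := fun k => S k) ⟨x, hx⟩ (fun k y => ⟨lift k y.2, hliftS k y.2⟩) k
  exact ⟨fun k => w k, rfl, fun k => ⟨(w k).2, hlift k (w k).2⟩⟩

section InverseSystem

variable {E : ℕ → Type*} [∀ n, AddCommGroup (E n)] [∀ n, Module ℝ (E n)]
  {p : ∀ {n m : ℕ}, n ≤ m → (E m →ₗ[ℝ] E n)}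

theorem apply_refl_of_surjective
    (hpsurj : ∀ n, Function.Surjective (p (le_refl n)))
    (hpcomp : ∀ {n m k : ℕ} (hnm : n ≤ m) (hmk : m ≤ k) (x : E k),
      p hnm (p hmk x) = p (hnm.trans hmk) x)
    (n : ℕ) (x : E n) : p (le_refl n) x = x := by
  obtain ⟨y, rfl⟩ := hpsurj n x
  exact hpcomp _ _ y

theorem mem_threads_of_succ
    (hpcomp : ∀ {n m k : ℕ} (hnm : n ≤ m) (hmk : m ≤ k) (x : E k),
      p hnm (p hmk x) = p (hnm.trans hmk) x)
    (hprefl : ∀ n (x : E n), p (le_refl n) x = x)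
    {u : ∀ n, E n} (hu : ∀ k, p k.le_succ (u (k + 1)) = u k) : u ∈ threads p := by
  intro n m hnm
  induction m, hnm using Nat.le_induction with
  | base => exact hprefl n (u n)
  | succ m hnm ih => rw [← hpcomp hnm m.le_succ, hu, ih]

theorem exists_mem_threads_of_image_eq
    (hpcomp : ∀ {n m k : ℕ} (hnm : n ≤ m) (hmk : m ≤ k) (x : E k),
      p hnm (p hmk x) = p (hnm.trans hmk) x)
    (hprefl : ∀ n (x : E n), p (le_refl n) x = x)
    (S : ∀ n, Set (E n)) (hS : ∀ {n m : ℕ} (h : n ≤ m), p h '' S m = S n)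
    {n : ℕ} {x : E n} (hx : x ∈ S n) :
    ∃ u ∈ threads p, (∀ k, u k ∈ S k) ∧ u n = x := by
  -- `v j` lives at level `n + j`; its thread property is that of the shifted system.
  obtain ⟨v, hv0, hvS⟩ := exists_seq_of_surjOn_succ (g := fun j => p (n + j).le_succ)
    (S := fun j => S (n + j)) (fun j => (hS (n + j).le_succ).superset) hx
  have hv : v ∈ threads (E := fun j => E (n + j)) fun h => p (Nat.add_le_add_left h n) :=
    mem_threads_of_succ (p := fun h => p (Nat.add_le_add_left h n))
      (fun _ _ _ => hpcomp _ _ _) (fun _ => hprefl _) fun k => (hvS k).2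
  refine ⟨fun k => p (Nat.le_add_left k n) (v k), fun a b hab => ?_,
    fun k => (hS _).subset (mem_image_of_mem _ (hvS k).1), ?_⟩
  · show _ = p _ (v a)
    rw [hpcomp, ← hv a b hab, hpcomp]
  · rw [← hv0, ← hv 0 n n.zero_le]

end InverseSystem

theorem inverseLimit_nat_projections_surjective_intervalPreserving_general
    {E : ℕ → Type*} [∀ n, Lattice (E n)] [∀ n, AddCommGroup (E n)]
    [∀ n, Module ℝ (E n)]
    (p : ∀ {n m : ℕ}, n ≤ m → (E m →ₗ[ℝ] E n))
    (hpsurj : ∀ {n m : ℕ} (h : n ≤ m), Function.Surjective (p h))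
    (hpip : ∀ {n m : ℕ} (h : n ≤ m) (u : E m), 0 ≤ u →
      (p h) '' Set.Icc 0 u = Set.Icc 0 (p h u))
    (hpcomp : ∀ {n m k : ℕ} (hnm : n ≤ m) (hmk : m ≤ k) (x : E k),
      p hnm (p hmk x) = p (hnm.trans hmk) x) :
    -- each projection is surjective
    (∀ (n : ℕ) (v : E n), ∃ u ∈ threads p, u n = v) ∧
    -- and interval preserving
    (∀ (n : ℕ), ∀ u ∈ threads p, 0 ≤ u →
      (fun w : ∀ k, E k => w n) '' {w | w ∈ threads p ∧ w ∈ Set.Icc 0 u} =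
        Set.Icc 0 (u n)) := by
  have hprefl := apply_refl_of_surjective (fun n => hpsurj (le_refl n)) hpcomp
  refine ⟨fun n v => ?_, fun n u hu hu0 => ?_⟩
  · obtain ⟨u, hu, -, rfl⟩ := exists_mem_threads_of_image_eq hpcomp hprefl (fun _ => univ)
      (fun h => image_univ_of_surjective (hpsurj h)) (mem_univ v)
    exact ⟨u, hu, rfl⟩
  · have hS : ∀ {a b : ℕ} (h : a ≤ b), p h '' Icc 0 (u b) = Icc 0 (u a) := fun h => by
      rw [hpip h _ (hu0 _), hu _ _ h]
    refine Subset.antisymm ?_ fun x hx => ?_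
    · rintro _ ⟨w, ⟨-, hw0, hwu⟩, rfl⟩
      exact ⟨hw0 n, hwu n⟩
    · obtain ⟨w, hw, hwS, rfl⟩ := exists_mem_threads_of_image_eq hpcomp hprefl _ hS hx
      exact ⟨w, ⟨hw, fun k => (hwS k).1, fun k => (hwS k).2⟩, rfl⟩

/-- Let `((E_n)_{n∈ℕ}, (p_{mn}))` be an inverse system of vector
lattices over `ℕ` whose connecting maps are surjective interval preserving lattice
homomorphisms, and let `(E, (p_n))` be its inverse limit (the thread sublattice with
the restricted coordinate projections).  Then each canonical projection
`p_n : E → E_n` is surjective and interval preserving. -/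
theorem inverseLimit_nat_projections_surjective_intervalPreserving
    {E : ℕ → Type*} [∀ n, Lattice (E n)] [∀ n, AddCommGroup (E n)]
    [∀ n, CovariantClass (E n) (E n) (· + ·) (· ≤ ·)] [∀ n, Module ℝ (E n)]
    (p : ∀ {n m : ℕ}, n ≤ m → (E m →ₗ[ℝ] E n))
    (hplat : ∀ {n m : ℕ} (h : n ≤ m) (a b : E m), p h (a ⊔ b) = p h a ⊔ p h b)
    (hpsurj : ∀ {n m : ℕ} (h : n ≤ m), Function.Surjective (p h))
    (hpip : ∀ {n m : ℕ} (h : n ≤ m) (u : E m), 0 ≤ u →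
      (p h) '' Set.Icc 0 u = Set.Icc 0 (p h u))
    (hpcomp : ∀ {n m k : ℕ} (hnm : n ≤ m) (hmk : m ≤ k) (x : E k),
      p hnm (p hmk x) = p (hnm.trans hmk) x) :
    -- each projection is surjective
    (∀ (n : ℕ) (v : E n), ∃ u ∈ threads p, u n = v) ∧
    -- and interval preserving
    (∀ (n : ℕ), ∀ u ∈ threads p, 0 ≤ u →
      (fun w : ∀ k, E k => w n) '' {w | w ∈ threads p ∧ w ∈ Set.Icc 0 u} =
        Set.Icc 0 (u n)) :=
  inverseLimit_nat_projections_surjective_intervalPreserving_general p hpsurj hpip hpcomp
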